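/- Let $I_t = \alpha_t I_0 + \beta_t I_1$ and $\tilde I_t = \tilde\alpha_t I_0 + \tilde\beta_t I_1$ be two interpolants built from the same pair $(I_0, I_1)$, with $\alpha, \beta, \tilde\alpha, \tilde\beta$ continuous, $\alpha_0 = \beta_1 = 1$, $\alpha_1 = \beta_0 = 0$, and $\beta_t, \tilde\beta_t > 0$ for $t \in (0,1]$. Then for every $t \in (0,1]$ there exists $t^* \in [0,1]$ such that $\alpha_{t^*}/\beta_{t^*} = \tilde\alpha_t/\tilde\beta_t$, and for such $t^*$ the conditional posteriors satisfy $\mathrm{Law}(I_1 \mid \tilde I_t = x) = \mathrm{Law}\big(I_1 \mid I_{t^*} = \tfrac{\beta_{t^*}}{\tilde\beta_t} x\big)$. -/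

import Mathlib

open MeasureTheory ProbabilityTheory

/-! At `s = 0` the function `α_s - r β_s` equals `1` and at `s = 1` it equals `-r ≤ 0`, so
the intermediate value theorem yields a time `t* ∈ (0,1]` with `α_{t*} / β_{t*} = r` for any
`r ≥ 0`. At such a time `Ĩ_t = (β̃_t / β_{t*}) I_{t*}`, and conditioning on a random variable
or on its image under a measurable bijection `e` gives the same posterior, up to composing
with `e⁻¹`. -/

lemma MeasureTheory.Measure.map_prodMap_compProd {β β' Ω : Type*} [MeasurableSpace β]
    [MeasurableSpace β'] [MeasurableSpace Ω] (μ : Measure β) [SFinite μ] (κ : Kernel β Ω)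
    [IsSFiniteKernel κ]
    (e : β ≃ᵐ β') :
    (μ ⊗ₘ κ).map (Prod.map e id) = μ.map e ⊗ₘ κ.comap e.symm e.symm.measurable := by
  ext s hs
  have hs' : MeasurableSet (Prod.map e id ⁻¹' s) := (e.measurable.prodMap measurable_id) hs
  rw [Measure.map_apply (e.measurable.prodMap measurable_id) hs, Measure.compProd_apply hs',
    Measure.compProd_apply hs, lintegral_map_equiv]
  simp only [Kernel.comap_apply, MeasurableEquiv.symm_apply_apply]
  rfl

lemma condDistrib_comp_measurableEquiv_ae_eq {α β β' Ω : Type*} [MeasurableSpace α]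
    [MeasurableSpace β] [MeasurableSpace β'] [MeasurableSpace Ω] [StandardBorelSpace Ω]
    [Nonempty Ω] {μ : Measure α} [IsFiniteMeasure μ] {X : α → β} {Y : α → Ω}
    (hY : AEMeasurable Y μ) (e : β ≃ᵐ β') :
    condDistrib Y (e ∘ X) μ =ᵐ[μ.map (e ∘ X)]
      (condDistrib Y X μ).comap e.symm e.symm.measurable := by
  by_cases hX : AEMeasurable X μ
  swap
  · have heX : ¬ AEMeasurable (e ∘ X) μ := fun h ↦
      hX (by simpa [Function.comp_def] using e.symm.measurable.comp_aemeasurable h)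
    simp [Measure.map_of_not_aemeasurable heX, Filter.EventuallyEq]
  refine condDistrib_ae_eq_of_measure_eq_compProd _ hY ?_
  calc μ.map (fun a ↦ (e (X a), Y a))
  _ = (μ.map fun a ↦ (X a, Y a)).map (Prod.map e id) := by
    rw [AEMeasurable.map_map_of_aemeasurable (by fun_prop) (hX.prodMk hY)]
    rfl
  _ = (μ.map X ⊗ₘ condDistrib Y X μ).map (Prod.map e id) := by
    rw [compProd_map_condDistrib hY]
  _ = μ.map (e ∘ X) ⊗ₘ (condDistrib Y X μ).comap e.symm e.symm.measurable := by
    rw [Measure.map_prodMap_compProd, AEMeasurable.map_map_of_aemeasurable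
      e.measurable.aemeasurable hX]

lemma condDistrib_const_smul_ae_eq {α E Ω : Type*} [MeasurableSpace α] [MeasurableSpace E]
    [AddCommGroup E] [Module ℝ E] [MeasurableConstSMul ℝ E] [MeasurableSpace Ω]
    [StandardBorelSpace Ω] [Nonempty Ω] {μ : Measure α} [IsFiniteMeasure μ]
    {X : α → E} {Y : α → Ω} (hY : AEMeasurable Y μ) {c : ℝ} (hc : c ≠ 0) :
    ∀ᵐ x ∂μ.map (fun a ↦ c • X a),
      condDistrib Y (fun a ↦ c • X a) μ x = condDistrib Y X μ (c⁻¹ • x) :=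
  condDistrib_comp_measurableEquiv_ae_eq hY (MeasurableEquiv.smul₀ c hc)

lemma exists_mem_Ioc_div_eq {α β : ℝ → ℝ} (hα : Continuous α) (hβ : Continuous β)
    (hα0 : α 0 = 1) (hβ0 : β 0 = 0) (hα1 : α 1 = 0) (hβ1 : β 1 = 1)
    (hβpos : ∀ s ∈ Set.Ioc (0 : ℝ) 1, 0 < β s) {r : ℝ} (hr : 0 ≤ r) :
    ∃ s ∈ Set.Ioc (0 : ℝ) 1, α s / β s = r := by
  have hcont : ContinuousOn (fun s ↦ α s - r * β s) (Set.Icc 0 1) := by fun_prop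
  obtain ⟨s, hs, hzero⟩ := intermediate_value_Icc' zero_le_one hcont
    (show (0 : ℝ) ∈ Set.Icc _ _ from ⟨by simp [hα1, hβ1, hr], by simp [hα0, hβ0]⟩)
  have hs_pos : 0 < s := by
    refine lt_of_le_of_ne hs.1 ?_
    rintro rfl
    simp [hα0, hβ0] at hzero
  have hβs : 0 < β s := hβpos s ⟨hs_pos, hs.2⟩
  refine ⟨s, ⟨hs_pos, hs.2⟩, ?_⟩
  rw [div_eq_iff hβs.ne']
  linarith [hzero]

lemma smul_add_smul_eq_smul_of_div_eq {E : Type*} [AddCommGroup E] [Module ℝ E]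
    {a b a' b' : ℝ} (hb : b ≠ 0) (hb' : b' ≠ 0) (h : a / b = a' / b') (x y : E) :
    a' • x + b' • y = (b' / b) • (a • x + b • y) := by
  rw [div_eq_div_iff hb hb'] at h
  rw [smul_add, smul_smul, smul_smul]
  congr 2
  · field_simp
    linarith
  · field_simp

theorem interpolant_posterior_reparametrization_general
    {d : ℕ} {Ω : Type*} [MeasurableSpace Ω] (μ : Measure Ω) [IsProbabilityMeasure μ]
    (I0 I1 : Ω → EuclideanSpace ℝ (Fin d))
    (hI1 : Measurable I1)
    (α β tα tβ : ℝ → ℝ)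
    (hαc : Continuous α) (hβc : Continuous β)
    (hα0 : α 0 = 1) (hβ1 : β 1 = 1) (hα1 : α 1 = 0) (hβ0 : β 0 = 0)
    (htαnn : ∀ t ∈ Set.Icc (0 : ℝ) 1, 0 ≤ tα t)
    (hβpos : ∀ t ∈ Set.Ioc (0 : ℝ) 1, 0 < β t)
    (htβpos : ∀ t ∈ Set.Ioc (0 : ℝ) 1, 0 < tβ t) :
    ∀ t ∈ Set.Ioc (0 : ℝ) 1,
      (∃ ts ∈ Set.Icc (0 : ℝ) 1, α ts / β ts = tα t / tβ t)
      ∧ ∀ ts ∈ Set.Ioc (0 : ℝ) 1, α ts / β ts = tα t / tβ t →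
          ∀ᵐ x ∂(μ.map (fun ω => tα t • I0 ω + tβ t • I1 ω)),
            condDistrib I1 (fun ω => tα t • I0 ω + tβ t • I1 ω) μ x =
              condDistrib I1 (fun ω => α ts • I0 ω + β ts • I1 ω) μ
                ((β ts / tβ t) • x) := by
  intro t ht
  have htβ : 0 < tβ t := htβpos t ht
  refine ⟨?_, fun ts hts hratio ↦ ?_⟩
  · obtain ⟨ts, hts, hratio⟩ := exists_mem_Ioc_div_eq hαc hβc hα0 hβ0 hα1 hβ1 hβpos
      (div_nonneg (htαnn t (Set.Ioc_subset_Icc_self ht)) htβ.le)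
    exact ⟨ts, Set.Ioc_subset_Icc_self hts, hratio⟩
  have hβts : 0 < β ts := hβpos ts hts
  have hrescale : (fun ω ↦ tα t • I0 ω + tβ t • I1 ω)
      = fun ω ↦ (tβ t / β ts) • (α ts • I0 ω + β ts • I1 ω) :=
    funext fun ω ↦ smul_add_smul_eq_smul_of_div_eq hβts.ne' htβ.ne' hratio _ _
  rw [hrescale]
  simpa only [inv_div] using
    condDistrib_const_smul_ae_eq hI1.aemeasurable (div_pos htβ hβts).ne'

/-- Reparametrization of the conditional posterior between two interpolants built
from the same pair `(I_0, I_1)`: for every `t ∈ (0,1]` there exists `t* ∈ [0,1]`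
with `α_{t*}/β_{t*} = α̃_t/β̃_t`, and for such `t*` (with `β_{t*} ≠ 0`, i.e.
`t* ∈ (0,1]`) the posteriors satisfy
`Law(I_1 | Ĩ_t = x) = Law(I_1 | I_{t*} = (β_{t*}/β̃_t) x)`. -/
theorem interpolant_posterior_reparametrization
    {d : ℕ} {Ω : Type*} [MeasurableSpace Ω] (μ : Measure Ω) [IsProbabilityMeasure μ]
    (I0 I1 : Ω → EuclideanSpace ℝ (Fin d))
    (hI0 : Measurable I0) (hI1 : Measurable I1)
    (hindep : IndepFun I0 I1 μ)
    (α β tα tβ : ℝ → ℝ)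
    (hαc : Continuous α) (hβc : Continuous β) (htαc : Continuous tα) (htβc : Continuous tβ)
    (hα0 : α 0 = 1) (hβ1 : β 1 = 1) (hα1 : α 1 = 0) (hβ0 : β 0 = 0)
    (htα0 : tα 0 = 1) (htβ1 : tβ 1 = 1) (htα1 : tα 1 = 0) (htβ0 : tβ 0 = 0)
    (hαnn : ∀ t ∈ Set.Icc (0 : ℝ) 1, 0 ≤ α t) (htαnn : ∀ t ∈ Set.Icc (0 : ℝ) 1, 0 ≤ tα t)
    (hβpos : ∀ t ∈ Set.Ioc (0 : ℝ) 1, 0 < β t)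
    (htβpos : ∀ t ∈ Set.Ioc (0 : ℝ) 1, 0 < tβ t) :
    ∀ t ∈ Set.Ioc (0 : ℝ) 1,
      (∃ ts ∈ Set.Icc (0 : ℝ) 1, α ts / β ts = tα t / tβ t)
      ∧ ∀ ts ∈ Set.Ioc (0 : ℝ) 1, α ts / β ts = tα t / tβ t →
          ∀ᵐ x ∂(μ.map (fun ω => tα t • I0 ω + tβ t • I1 ω)),
            condDistrib I1 (fun ω => tα t • I0 ω + tβ t • I1 ω) μ x =
              condDistrib I1 (fun ω => α ts • I0 ω + β ts • I1 ω) μ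
                ((β ts / tβ t) • x) :=
  interpolant_posterior_reparametrization_general μ I0 I1 hI1 α β tα tβ hαc hβc hα0 hβ1 hα1 hβ0
    htαnn hβpos htβpos
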